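/- Let Z = Q × [t − r, t + r) be a Calderón–Zygmund set in the (ax+b)-group 𝔸ₙ (n ≥ 1), where Q ⊆ ℝⁿ is a cube of side length L satisfying e²·eᵗ·r ≤ L < e⁸·eᵗ·r if r < 1, and eᵗ·e^{2r} ≤ L < eᵗ·e^{8r} if r ≥ 1. Then there exists a rectangle Z* ⊆ ℝ^{n+1} such that every Calderón–Zygmund set Z' with Z' ∩ Z ≠ ∅ and m^{n+1}(Z') ≤ 2·m^{n+1}(Z) satisfies Z' ⊆ Z*, and m^{n+1}(Z*) ≤ 4^{n+2} e^{24n} m^{n+1}(Z). Consequently, the Hardy–Littlewood maximal constant of the family of Calderón–Zygmund sets with respect to Lebesgue measure m^{n+1} is at most 4^{n+2} e^{24n}. -/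

import Mathlib

open Set MeasureTheory ENNReal

/-- The norm `‖F‖_𝒬`: supremum of finite sums of `F` over pairwise disjoint members of `𝒬`. -/
noncomputable def hlNorm {X : Type*} (𝒬 : Set (Set X)) (F : Set X → ℝ≥0∞) : ℝ≥0∞ :=
  ⨆ s : {s : Finset (Set X) // ↑s ⊆ 𝒬 ∧ (s : Set (Set X)).Pairwise Disjoint}, ∑ Q ∈ s.1, F Q

/-- Left-closed right-open cube of corner `c` and side length `L` in `ℝⁿ`. -/
def czCube {n : ℕ} (c : Fin n → ℝ) (L : ℝ) : Set (Fin n → ℝ) :=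
  {a | ∀ i, c i ≤ a i ∧ a i < c i + L}

/-- Calderón–Zygmund sets in the `(ax+b)`-group `𝔸ₙ = ℝⁿ × ℝ`. -/
def IsCZ (n : ℕ) (Z : Set ((Fin n → ℝ) × ℝ)) : Prop :=
  ∃ (c : Fin n → ℝ) (L t r : ℝ), 0 < r ∧ 0 < L ∧
    (r < 1 → Real.exp 2 * Real.exp t * r ≤ L ∧ L < Real.exp 8 * Real.exp t * r) ∧
    (1 ≤ r → Real.exp t * Real.exp (2 * r) ≤ L ∧ L < Real.exp t * Real.exp (8 * r)) ∧
    Z = czCube c L ×ˢ Set.Ico (t - r) (t + r)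

/-!
Let `Z = Q × [t - r, t + r)` have side `L`, and let `Z' = Q' × [t' - r', t' + r')` (side `L'`) meet
`Z` with `L'ⁿ r' ≤ 2 Lⁿ r`. Meeting gives `|t - t'| < r + r'`, so the side-length windows
`eᵗ φ₂(r) ≤ L < eᵗ φ₈(r)` (`φₖ = czScale k`) of the two sets can be compared up to a factor
`e^(r + r')`; together with the volume bound this forces `r' ≤ 2e^(8n) r` and `L' ≤ e⁹ L`.
Hence `Z'` lies in the box obtained by widening `Q` by `e⁹ L` and `[t - r, t + r]` by `4e^(8n) r`
on each side, of volume `(1 + 2e⁹)ⁿ (1 + 4e^(8n)) |Z| ≤ 4^(n+2) e^(24n) |Z|`.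

The weak-type bound is the Vitali argument: the sets with `F Z > ρ |Z|` have measure at most
`ρ⁻¹ ‖F‖`, so one can select disjoint ones such that every other meets a selected one of at least
half its measure and hence lies in its enlargement; summing `|Z*| ≤ C |Z| < C ρ⁻¹ F Z` over the
selected sets gives `C ρ⁻¹ ‖F‖`.
-/

open Real

lemma Ico_subset_Icc_of_inter_nonempty {a b a' b' M : ℝ} (h : (Ico a' b' ∩ Ico a b).Nonempty)
    (hM : b' - a' ≤ M) : Ico a' b' ⊆ Icc (a - M) (b + M) := by
  obtain ⟨y, ⟨hy'₁, hy'₂⟩, hy₁, hy₂⟩ := h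
  intro x ⟨hx₁, hx₂⟩
  constructor <;> linarith

lemma volume_pi_Icc_prod_Icc {n : ℕ} (lo hi : Fin n → ℝ) (a b : ℝ) :
    volume ((univ.pi fun i => Icc (lo i) (hi i)) ×ˢ Icc a b) =
      (∏ i, ENNReal.ofReal (hi i - lo i)) * ENNReal.ofReal (b - a) := by
  rw [Measure.volume_eq_prod, Measure.prod_prod, volume_pi_pi]
  simp [Real.volume_Icc]

section hlNorm

variable {X : Type*} {𝒬 : Set (Set X)}

lemma tsum_le_hlNorm (F : Set X → ℝ≥0∞) {u : Set (Set X)} (hu : u ⊆ 𝒬)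
    (hdisj : u.PairwiseDisjoint id) : ∑' Q : u, F Q ≤ hlNorm 𝒬 F := by
  classical
  rw [ENNReal.tsum_eq_iSup_sum]
  refine iSup_le fun s => ?_
  rw [← Finset.sum_image fun _ _ _ _ h => Subtype.val_injective h]
  have hsub : (s.image Subtype.val : Set (Set X)) ⊆ u := by
    intro Q hQ
    obtain ⟨P, -, rfl⟩ := Finset.mem_image.1 hQ
    exact P.2
  exact le_iSup_of_le ⟨s.image Subtype.val, hsub.trans hu, hdisj.subset hsub⟩ le_rfl

lemma le_hlNorm (F : Set X → ℝ≥0∞) {Q : Set X} (hQ : Q ∈ 𝒬) :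
    F Q ≤ hlNorm 𝒬 F := by
  simpa using tsum_le_hlNorm F (singleton_subset_iff.2 hQ) (pairwiseDisjoint_singleton Q id)

end hlNorm

section MaximalInequality

variable {X : Type*} [MeasurableSpace X] {μ : Measure X} {𝒬 : Set (Set X)}

noncomputable def hlMaximal (μ : Measure X) (𝒬 : Set (Set X)) (F : Set X → ℝ≥0∞)
    (x : X) : ℝ≥0∞ :=
  ⨆ Q ∈ {Q | Q ∈ 𝒬 ∧ x ∈ Q}, F Q / μ Q

lemma Set.PairwiseDisjoint.countable_of_measure_pos [SFinite μ] {u : Set (Set X)}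
    (hdisj : u.PairwiseDisjoint id) (hmeas : ∀ Q ∈ u, NullMeasurableSet Q μ)
    (hpos : ∀ Q ∈ u, 0 < μ Q) : u.Countable := by
  have hcount := Measure.countable_meas_pos_of_disjoint_iUnion₀ (μ := μ)
    (As := fun Q : u => (Q : Set X)) (fun Q => hmeas Q Q.2)
    (fun P Q hPQ => (hdisj P.2 Q.2 (Subtype.val_injective.ne hPQ)).aedisjoint)
  have hall : {Q : u | 0 < μ Q} = univ := eq_univ_of_forall fun Q => hpos Q Q.2
  rw [hall, countable_univ_iff] at hcount
  exact countable_coe_iff.1 hcount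

lemma exists_pairwiseDisjoint_covering_of_measure_le (S : Set (Set X)) {R : ℝ≥0∞}
    (hR : R ≠ ∞) (hS : ∀ Q ∈ S, μ Q ≤ R) (hne : ∀ Q ∈ S, Q.Nonempty) :
    ∃ u ⊆ S, u.PairwiseDisjoint id ∧
      ∀ Q ∈ S, ∃ P ∈ u, (Q ∩ P).Nonempty ∧ μ Q ≤ 2 * μ P := by
  obtain ⟨u, huS, hdisj, hcov⟩ := Vitali.exists_disjoint_subfamily_covering_enlargement id S
    (fun Q => (μ Q).toReal) 2 one_lt_two (fun _ _ => ENNReal.toReal_nonneg) R.toReal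
    (fun Q hQ => ENNReal.toReal_mono hR (hS Q hQ)) hne
  refine ⟨u, huS, hdisj, fun Q hQ => ?_⟩
  obtain ⟨P, hPu, hmeet, hle⟩ := hcov Q hQ
  have hP : μ P ≠ ∞ := ne_top_of_le_ne_top hR (hS P (huS hPu))
  refine ⟨P, hPu, hmeet, ?_⟩
  rwa [← ENNReal.toReal_le_toReal (ne_top_of_le_ne_top hR (hS Q hQ)) (by finiteness),
    ENNReal.toReal_mul, ENNReal.toReal_ofNat]

lemma exists_of_lt_hlMaximal (F : Set X → ℝ≥0∞) {ρ : ℝ≥0∞} {x : X}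
    (hx : ρ < hlMaximal μ 𝒬 F x) : ∃ Q ∈ 𝒬, x ∈ Q ∧ ρ < F Q / μ Q := by
  simpa [hlMaximal, lt_iSup_iff, and_assoc] using hx

lemma ne_zero_of_subset_of_measure_le {C : ℝ≥0∞} {Q Q' : Set X} (hQ : 0 < μ Q)
    (hsub : Q ⊆ Q') (hvol : μ Q' ≤ C * μ Q) : C ≠ 0 := by
  rintro rfl
  rw [zero_mul, nonpos_iff_eq_zero] at hvol
  exact hQ.ne' (measure_mono_null hsub hvol)

theorem measure_lt_hlMaximal_le [SFinite μ] {C : ℝ≥0∞}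
    (hmeas : ∀ Q ∈ 𝒬, NullMeasurableSet Q μ) (hpos : ∀ Q ∈ 𝒬, 0 < μ Q)
    (henl : ∀ Q ∈ 𝒬, ∃ Q' : Set X,
      (∀ P ∈ 𝒬, (P ∩ Q).Nonempty → μ P ≤ 2 * μ Q → P ⊆ Q') ∧ μ Q' ≤ C * μ Q)
    (F : Set X → ℝ≥0∞) {ρ : ℝ≥0∞} (hρ : 0 < ρ) (hρ' : ρ ≠ ∞) :
    μ {x | ρ < hlMaximal μ 𝒬 F x} ≤ C * ρ⁻¹ * hlNorm 𝒬 F := by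
  by_cases hN : hlNorm 𝒬 F = ∞
  · rcases eq_empty_or_nonempty {x | ρ < hlMaximal μ 𝒬 F x} with hE | ⟨x, hx⟩
    · simp [hE]
    obtain ⟨Q, hQ, -, -⟩ := exists_of_lt_hlMaximal F hx
    obtain ⟨Q', hsub, hvol⟩ := henl Q hQ
    have hQQ : (Q ∩ Q).Nonempty := by
      rw [inter_self]; exact nonempty_of_measure_ne_zero (hpos Q hQ).ne'
    have hC : C ≠ 0 := ne_zero_of_subset_of_measure_le (hpos Q hQ)
      (hsub Q hQ hQQ (le_mul_of_one_le_left' one_le_two)) hvol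
    simp [hN, hC, hρ']
  set S := {Q | Q ∈ 𝒬 ∧ ρ < F Q / μ Q}
  have hS : ∀ Q ∈ S, μ Q ≤ F Q / ρ := fun Q hQ =>
    (ENNReal.le_div_iff_mul_le (Or.inl hρ.ne') (Or.inl hρ')).2
      (by rw [mul_comm]; exact (ENNReal.mul_lt_of_lt_div hQ.2).le)
  obtain ⟨u, huS, hdisj, hcov⟩ := exists_pairwiseDisjoint_covering_of_measure_le S
    (ENNReal.div_ne_top hN hρ.ne')
    (fun Q hQ => (hS Q hQ).trans (ENNReal.div_le_div_right (le_hlNorm F hQ.1) ρ))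
    (fun Q hQ => nonempty_of_measure_ne_zero (hpos Q hQ.1).ne')
  choose! enl henl_sub henl_vol using henl
  have hcover : {x | ρ < hlMaximal μ 𝒬 F x} ⊆ ⋃ Q ∈ u, enl Q := by
    intro x hx
    obtain ⟨P, hP, hxP, hlt⟩ := exists_of_lt_hlMaximal F hx
    obtain ⟨Q, hQu, hmeet, hle⟩ := hcov P ⟨hP, hlt⟩
    exact mem_biUnion hQu (henl_sub Q (huS hQu).1 P hP hmeet hle hxP)
  have hu : u.Countable := hdisj.countable_of_measure_pos
    (fun Q hQ => hmeas Q (huS hQ).1) (fun Q hQ => hpos Q (huS hQ).1)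
  calc μ {x | ρ < hlMaximal μ 𝒬 F x} ≤ μ (⋃ Q ∈ u, enl Q) := measure_mono hcover
    _ ≤ ∑' Q : u, μ (enl Q) := measure_biUnion_le μ hu enl
    _ ≤ ∑' Q : u, C * (ρ⁻¹ * F Q) := ENNReal.tsum_le_tsum fun Q =>
        (henl_vol Q (huS Q.2).1).trans (by
          gcongr; rw [mul_comm, ← div_eq_mul_inv]; exact hS Q (huS Q.2))
    _ = C * ρ⁻¹ * ∑' Q : u, F Q := by
        rw [ENNReal.tsum_mul_left, ENNReal.tsum_mul_left, mul_assoc]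
    _ ≤ C * ρ⁻¹ * hlNorm 𝒬 F := by
        gcongr; exact tsum_le_hlNorm F (fun Q hQ => (huS hQ).1) hdisj

end MaximalInequality

noncomputable def czScale (k r : ℝ) : ℝ := if r < 1 then exp k * r else exp (k * r)

lemma czScale_pos (k : ℝ) {r : ℝ} (hr : 0 < r) : 0 < czScale k r := by
  unfold czScale; split_ifs <;> positivity

lemma radius_le_of_czScale_le {n : ℕ} (hn : 1 ≤ n) {r r' : ℝ} (hr : 0 < r)
    (h : czScale 2 r' ^ n * r' ≤ 2 * (exp (r + r') * czScale 8 r) ^ n * r) :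
    r' ≤ 2 * exp 8 ^ n * r := by
  have hK : 1 ≤ 2 * exp 8 ^ n := by
    have := one_le_pow₀ (M₀ := ℝ) (one_le_exp (by norm_num : (0 : ℝ) ≤ 8)) (n := n)
    linarith
  unfold czScale at h
  split_ifs at h with hr'1 hr1 hr1
  · have hpow : r' ^ (n + 1) ≤ (2 * exp 8 ^ n * r) ^ (n + 1) := by
      have hcancel : exp 2 ^ n * r' ^ (n + 1) ≤ exp 2 ^ n * (2 * exp 8 ^ n * r ^ (n + 1)) :=
        calc exp 2 ^ n * r' ^ (n + 1) = (exp 2 * r') ^ n * r' := by ring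
          _ ≤ 2 * (exp (r + r') * (exp 8 * r)) ^ n * r := h
          _ ≤ 2 * (exp 2 * (exp 8 * r)) ^ n * r := by
              gcongr; linarith
          _ = exp 2 ^ n * (2 * exp 8 ^ n * r ^ (n + 1)) := by ring
      calc r' ^ (n + 1) ≤ 2 * exp 8 ^ n * r ^ (n + 1) :=
            le_of_mul_le_mul_left hcancel (by positivity)
        _ ≤ (2 * exp 8 ^ n) ^ (n + 1) * r ^ (n + 1) := by
            gcongr; exact le_self_pow₀ hK (by omega)
        _ = (2 * exp 8 ^ n * r) ^ (n + 1) := (mul_pow _ _ _).symm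
    exact le_of_pow_le_pow_left₀ (by omega) (by positivity) hpow
  · calc r' ≤ r := by linarith
      _ ≤ 2 * exp 8 ^ n * r := le_mul_of_one_le_left hr.le hK
  · have hcancel : exp (2 * r') ^ n * r' ≤ exp (2 * r') ^ n * (2 * exp 8 ^ n * r) :=
      calc exp (2 * r') ^ n * r' ≤ 2 * (exp (r + r') * (exp 8 * r)) ^ n * r := h
        _ ≤ 2 * (exp (2 * r') * (exp 8 * 1)) ^ n * r := by
            gcongr; linarith
        _ = exp (2 * r') ^ n * (2 * exp 8 ^ n * r) := by ring
    exact le_of_mul_le_mul_left hcancel (by positivity)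
  · -- once `r' > 9r`, the factor `e^(2nr')` outgrows `e^(n(r + r') + 8nr)`
    have h9 : r' ≤ 9 * r := by
      by_contra! h9
      have hcancel : exp (2 * r') ^ n * r' ≤ exp (2 * r') ^ n * (2 * r) :=
        calc exp (2 * r') ^ n * r' ≤ 2 * (exp (r + r') * exp (8 * r)) ^ n * r := h
          _ ≤ 2 * exp (2 * r') ^ n * r := by
              gcongr; rw [← exp_add]; exact exp_le_exp.2 (by linarith)
          _ = exp (2 * r') ^ n * (2 * r) := by ring
      linarith [le_of_mul_le_mul_left hcancel (by positivity)]
    have hK9 : 9 ≤ 2 * exp 8 ^ n := by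
      have h8 : 9 ≤ exp 8 := by linarith [add_one_le_exp (8 : ℝ)]
      linarith [le_self_pow₀ (one_le_exp (by norm_num : (0 : ℝ) ≤ 8)) (by omega : n ≠ 0)]
    nlinarith

lemma exp_add_mul_czScale_le {r r' : ℝ} (hr' : 0 < r') (h : 9 * r' ≤ r) :
    exp (r + r') * czScale 8 r' ≤ exp 9 * czScale 2 r := by
  unfold czScale
  split_ifs with hr'1 hr1 hr1
  · calc exp (r + r') * (exp 8 * r') ≤ exp 2 * (exp 9 * r) := by
          gcongr
          · linarith
          · norm_num
          · linarith
      _ = exp 9 * (exp 2 * r) := by ring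
  · calc exp (r + r') * (exp 8 * r') ≤ exp (r + 1) * (exp 8 * 1) := by
          gcongr
      _ = exp 9 * exp r := by rw [mul_one, ← exp_add, ← exp_add]; ring_nf
      _ ≤ exp 9 * exp (2 * r) := by gcongr; linarith
  · linarith
  · calc exp (r + r') * exp (8 * r') = 1 * exp (r + 9 * r') := by rw [← exp_add]; ring_nf
      _ ≤ exp 9 * exp (2 * r) := by
          gcongr
          · exact one_le_exp (by norm_num)
          · linarith

lemma czCube_eq_pi {n : ℕ} (c : Fin n → ℝ) (L : ℝ) :
    czCube c L = univ.pi fun i => Ico (c i) (c i + L) := by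
  ext a
  simp [czCube, mem_pi]

lemma volume_czCube_prod_Ico {n : ℕ} (c : Fin n → ℝ) {L : ℝ} (hL : 0 ≤ L) (t r : ℝ) :
    volume (czCube c L ×ˢ Ico (t - r) (t + r)) = ENNReal.ofReal (L ^ n * (2 * r)) := by
  rw [czCube_eq_pi, Measure.volume_eq_prod, Measure.prod_prod, volume_pi_pi]
  simp only [Real.volume_Ico, add_sub_cancel_left, Finset.prod_const, Finset.card_univ,
    Fintype.card_fin, ENNReal.ofReal_mul (pow_nonneg hL n), ENNReal.ofReal_pow hL]
  rw [show t + r - (t - r) = 2 * r by ring]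

namespace IsCZ

lemma exists_czScale {n : ℕ} {Z : Set ((Fin n → ℝ) × ℝ)} (h : IsCZ n Z) :
    ∃ (c : Fin n → ℝ) (L t r : ℝ), 0 < r ∧ 0 < L ∧ exp t * czScale 2 r ≤ L ∧
      L < exp t * czScale 8 r ∧ Z = czCube c L ×ˢ Ico (t - r) (t + r) := by
  obtain ⟨c, L, t, r, hr, hL, hsmall, hlarge, rfl⟩ := h
  refine ⟨c, L, t, r, hr, hL, ?_⟩
  unfold czScale
  split_ifs with hr1
  · obtain ⟨hlo, hhi⟩ := hsmall hr1
    exact ⟨by linarith, by linarith, rfl⟩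
  · exact ⟨(hlarge (not_lt.1 hr1)).1, (hlarge (not_lt.1 hr1)).2, rfl⟩

lemma measurableSet {n : ℕ} {Z : Set ((Fin n → ℝ) × ℝ)} (h : IsCZ n Z) :
    MeasurableSet Z := by
  obtain ⟨c, L, t, r, -, -, -, -, rfl⟩ := h
  rw [czCube_eq_pi]
  exact (MeasurableSet.univ_pi fun i => measurableSet_Ico).prod measurableSet_Ico

lemma volume_pos {n : ℕ} {Z : Set ((Fin n → ℝ) × ℝ)} (h : IsCZ n Z) : 0 < volume Z := by
  obtain ⟨c, L, t, r, hr, hL, -, -, rfl⟩ := h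
  rw [volume_czCube_prod_Ico c hL.le]
  exact ENNReal.ofReal_pos.2 (by positivity)

section Parameters

variable {n : ℕ} {L t r L' t' r' : ℝ}

lemma radius_le_of_volume_le (hn : 1 ≤ n) (hL₀ : 0 ≤ L) (hr : 0 < r) (hr' : 0 < r')
    (hL' : exp t' * czScale 2 r' ≤ L') (hL : L < exp t * czScale 8 r)
    (hvol : L' ^ n * r' ≤ 2 * (L ^ n * r)) (ht : t < t' + (r + r')) :
    r' ≤ 2 * exp 8 ^ n * r := by
  have h2 := czScale_pos 2 hr'
  have h8 := czScale_pos 8 hr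
  refine radius_le_of_czScale_le hn hr (le_of_mul_le_mul_left ?_ (pow_pos (exp_pos t') n))
  calc exp t' ^ n * (czScale 2 r' ^ n * r') = (exp t' * czScale 2 r') ^ n * r' := by ring
    _ ≤ L' ^ n * r' := by gcongr
    _ ≤ 2 * (L ^ n * r) := hvol
    _ ≤ 2 * ((exp t * czScale 8 r) ^ n * r) := by gcongr
    _ ≤ 2 * ((exp t' * exp (r + r') * czScale 8 r) ^ n * r) := by
        gcongr; rw [← exp_add]; exact exp_le_exp.2 ht.le
    _ = exp t' ^ n * (2 * (exp (r + r') * czScale 8 r) ^ n * r) := by ring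

lemma side_le_of_volume_le (hn : 1 ≤ n) (hL₀ : 0 ≤ L) (hr' : 0 < r')
    (hL : exp t * czScale 2 r ≤ L) (hL' : L' < exp t' * czScale 8 r')
    (hvol : L' ^ n * r' ≤ 2 * (L ^ n * r)) (ht : t' < t + (r + r')) :
    L' ≤ exp 9 * L := by
  -- For `r < 9r'` the volume comparison bounds `L'`; otherwise `Z'` is so much shorter that its
  -- own side-length window already lies below `e⁹ L`.
  rcases lt_or_ge r (9 * r') with h9 | h9
  · have hLn : L' ^ n ≤ 18 * L ^ n :=
      le_of_mul_le_mul_right (by nlinarith [pow_nonneg hL₀ n]) hr'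
    have h18 : 18 ≤ exp 9 ^ n := by
      have h3 := add_one_le_exp (3 : ℝ)
      have h27 := pow_le_pow_left₀ (by norm_num) h3 3
      have : 18 ≤ exp 9 := by
        rw [show (9 : ℝ) = (3 : ℕ) * 3 by norm_num, exp_nat_mul]; linarith
      linarith [le_self_pow₀ (one_le_exp (by norm_num : (0 : ℝ) ≤ 9)) (by omega : n ≠ 0)]
    refine le_of_pow_le_pow_left₀ (by omega : n ≠ 0) (by positivity) ?_
    calc L' ^ n ≤ 18 * L ^ n := hLn
      _ ≤ exp 9 ^ n * L ^ n := by gcongr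
      _ = (exp 9 * L) ^ n := (mul_pow _ _ _).symm
  · have h8 := czScale_pos 8 hr'
    calc L' ≤ exp t' * czScale 8 r' := hL'.le
      _ ≤ exp t * (exp (r + r') * czScale 8 r') := by
          rw [← mul_assoc, ← exp_add]; gcongr
      _ ≤ exp t * (exp 9 * czScale 2 r) :=
          mul_le_mul_of_nonneg_left (exp_add_mul_czScale_le hr' h9) (exp_pos t).le
      _ = exp 9 * (exp t * czScale 2 r) := by ring
      _ ≤ exp 9 * L := by gcongr

end Parameters

lemma enlargement_constant_le (n : ℕ) :
    (1 + 2 * exp 9) ^ n * (1 + 2 * (2 * exp 8 ^ n)) ≤ 4 ^ (n + 2) * exp (24 * n) := by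
  have h9 : 1 + 2 * exp 9 ≤ 4 * exp 12 := by
    linarith [one_le_exp (by norm_num : (0 : ℝ) ≤ 12),
      exp_le_exp.2 (by norm_num : (9 : ℝ) ≤ 12)]
  have h8 : 1 + 2 * (2 * exp 8 ^ n) ≤ 16 * exp 12 ^ n := by
    linarith [one_le_pow₀ (M₀ := ℝ) (one_le_exp (by norm_num : (0 : ℝ) ≤ 12)) (n := n),
      pow_le_pow_left₀ (exp_pos 8).le (exp_le_exp.2 (by norm_num : (8 : ℝ) ≤ 12)) n]
  calc (1 + 2 * exp 9) ^ n * (1 + 2 * (2 * exp 8 ^ n))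
      ≤ (4 * exp 12) ^ n * (16 * exp 12 ^ n) := by gcongr
    _ = 4 ^ (n + 2) * exp (24 * n) := by
        rw [mul_comm (24 : ℝ), exp_nat_mul, show (24 : ℝ) = 12 + 12 by norm_num, exp_add]; ring

lemma volume_enlargement_le {n : ℕ} (c : Fin n → ℝ) {L r : ℝ} (hL : 0 ≤ L) (hr : 0 ≤ r)
    (t : ℝ) :
    volume ((univ.pi fun i => Icc (c i - exp 9 * L) (c i + L + exp 9 * L)) ×ˢ
        Icc (t - r - 2 * (2 * exp 8 ^ n * r)) (t + r + 2 * (2 * exp 8 ^ n * r))) ≤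
      4 ^ (n + 2) * ENNReal.ofReal (exp (24 * n)) * ENNReal.ofReal (L ^ n * (2 * r)) := by
  rw [volume_pi_Icc_prod_Icc]
  simp only [show ∀ i, c i + L + exp 9 * L - (c i - exp 9 * L) = (1 + 2 * exp 9) * L from
    fun i => by ring, Finset.prod_const, Finset.card_univ, Fintype.card_fin]
  rw [← ENNReal.ofReal_pow (by positivity), ← ENNReal.ofReal_mul (by positivity),
    show (4 : ℝ≥0∞) ^ (n + 2) = ENNReal.ofReal (4 ^ (n + 2)) by simp,
    ← ENNReal.ofReal_mul (by positivity), ← ENNReal.ofReal_mul (by positivity)]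
  refine ENNReal.ofReal_le_ofReal ?_
  calc ((1 + 2 * exp 9) * L) ^ n *
        (t + r + 2 * (2 * exp 8 ^ n * r) - (t - r - 2 * (2 * exp 8 ^ n * r)))
      = (1 + 2 * exp 9) ^ n * (1 + 2 * (2 * exp 8 ^ n)) * (L ^ n * (2 * r)) := by
        rw [mul_pow]; ring
    _ ≤ 4 ^ (n + 2) * exp (24 * n) * (L ^ n * (2 * r)) :=
        mul_le_mul_of_nonneg_right (enlargement_constant_le n) (by positivity)

theorem exists_enlargement {n : ℕ} (hn : 1 ≤ n) {Z : Set ((Fin n → ℝ) × ℝ)}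
    (hZ : IsCZ n Z) :
    ∃ (lo hi : Fin n → ℝ) (a b : ℝ),
      (∀ Z' : Set ((Fin n → ℝ) × ℝ), IsCZ n Z' → (Z' ∩ Z).Nonempty →
        volume Z' ≤ 2 * volume Z → Z' ⊆ (univ.pi fun i => Icc (lo i) (hi i)) ×ˢ Icc a b) ∧
      volume ((univ.pi fun i => Icc (lo i) (hi i)) ×ˢ Icc a b) ≤
        4 ^ (n + 2) * ENNReal.ofReal (exp (24 * n)) * volume Z := by
  obtain ⟨c, L, t, r, hr, hL, hLlo, hLhi, rfl⟩ := hZ.exists_czScale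
  refine ⟨fun i => c i - exp 9 * L, fun i => c i + L + exp 9 * L,
    t - r - 2 * (2 * exp 8 ^ n * r), t + r + 2 * (2 * exp 8 ^ n * r), ?_, ?_⟩
  · rintro Z' hZ' ⟨⟨y, s⟩, hyZ', hy, hs⟩ hvol
    obtain ⟨c', L', t', r', hr', hL', hL'lo, hL'hi, rfl⟩ := hZ'.exists_czScale
    obtain ⟨hy', hs'⟩ := hyZ'
    have hvol' : L' ^ n * r' ≤ 2 * (L ^ n * r) := by
      rw [volume_czCube_prod_Ico c' hL'.le, volume_czCube_prod_Ico c hL.le,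
        ← ENNReal.ofReal_ofNat 2, ← ENNReal.ofReal_mul (by norm_num),
        ENNReal.ofReal_le_ofReal_iff (by positivity)] at hvol
      linarith
    have hrad := radius_le_of_volume_le hn hL.le hr hr' hL'lo hLhi hvol'
      (by linarith [hs.1, hs'.2])
    have hside := side_le_of_volume_le hn hL.le hr' hLlo hL'hi hvol' (by linarith [hs.2, hs'.1])
    rw [czCube_eq_pi]
    exact prod_mono
      (pi_mono fun i _ => Ico_subset_Icc_of_inter_nonempty ⟨y i, hy' i, hy i⟩ (by linarith))
      (Ico_subset_Icc_of_inter_nonempty ⟨s, hs', hs⟩ (by linarith))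
  · rw [volume_czCube_prod_Ico c hL.le]
    exact volume_enlargement_le c hL.le hr.le t

end IsCZ

theorem cz_hl_constant (n : ℕ) (hn : 1 ≤ n) :
    (∀ Z : Set ((Fin n → ℝ) × ℝ), IsCZ n Z →
      ∃ (lo hi : Fin n → ℝ) (a b : ℝ),
        (∀ Z' : Set ((Fin n → ℝ) × ℝ), IsCZ n Z' → (Z' ∩ Z).Nonempty →
          volume Z' ≤ 2 * volume Z →
          Z' ⊆ (Set.univ.pi fun i => Set.Icc (lo i) (hi i)) ×ˢ Set.Icc a b) ∧
        volume ((Set.univ.pi fun i => Set.Icc (lo i) (hi i)) ×ˢ Set.Icc a b) ≤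
          4 ^ (n + 2) * ENNReal.ofReal (Real.exp (24 * n)) * volume Z) ∧
    (∀ F : Set ((Fin n → ℝ) × ℝ) → ℝ≥0∞, ∀ r : ℝ≥0∞, 0 < r → r ≠ ⊤ →
      volume {x | r < ⨆ Z ∈ {Z | IsCZ n Z ∧ x ∈ Z}, F Z / volume Z} ≤
        4 ^ (n + 2) * ENNReal.ofReal (Real.exp (24 * n)) * r⁻¹ *
          hlNorm {Z | IsCZ n Z} F) := by
  have henl := fun Z (hZ : IsCZ n Z) => hZ.exists_enlargement hn
  refine ⟨henl, fun F ρ hρ hρ' => measure_lt_hlMaximal_le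
    (fun _ hZ => (IsCZ.measurableSet hZ).nullMeasurableSet) (fun _ => IsCZ.volume_pos) ?_
    F hρ hρ'⟩
  intro Z hZ
  obtain ⟨lo, hi, a, b, hsub, hvol⟩ := henl Z hZ
  exact ⟨_, hsub, hvol⟩
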